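/- For any univariate polynomials a, b over ℂ and nonnegative integers i, j, one has r_i(a)·r_j(b) ≤ r_{i+j}(ab) in the sense r_i(a) + r_j(b) ≤ r_{i+j}(a·b) when a, b ≠ 0. More precisely: 𝔯_i(a)·𝔯_j(b) divides 𝔯_{i+j}(ab), hence r_i(a) + r_j(b) ≤ r_{i+j}(ab). -/

import Mathlib

open Polynomial

/-- The radical of `g`: product of the distinct monic linear factors of `g`. -/
noncomputable def rad (g : ℂ[X]) : ℂ[X] := ∏ a ∈ g.roots.toFinset, (X - C a)

/-- `radE e g = gcd (g, rad(g)^e)`, the `(e+1)`-th-power-free part of `g`. -/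
noncomputable def radE (e : ℕ) (g : ℂ[X]) : ℂ[X] := EuclideanDomain.gcd g (rad g ^ e)

/-- `rE e g` is the degree of `radE e g`. -/
noncomputable def rE (e : ℕ) (g : ℂ[X]) : ℕ := (radE e g).natDegree

/-!
The root `x` has multiplicity `min (mult_x g) e` in `𝔯_e(g)`. Since
`min m i + min n j ≤ min (m + n) (i + j)`, every root of `𝔯_i(a) 𝔯_j(b)` occurs in
`𝔯_{i+j}(ab)` with at least the same multiplicity, and over the algebraically closed field `ℂ`
this is divisibility. Comparing degrees gives the inequality.
-/

theorem Polynomial.rootMultiplicity_euclideanGcd {K : Type*} [Field K] [DecidableEq K]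
    {p q : K[X]} (hp : p ≠ 0) (hq : q ≠ 0) (x : K) :
    rootMultiplicity x (EuclideanDomain.gcd p q) =
      min (rootMultiplicity x p) (rootMultiplicity x q) := by
  have hgcd : EuclideanDomain.gcd p q ≠ 0 := fun h => hp (EuclideanDomain.gcd_eq_zero_iff.mp h).1
  refine eq_of_forall_le_iff fun n => ?_
  rw [le_min_iff, le_rootMultiplicity_iff hgcd, le_rootMultiplicity_iff hp,
    le_rootMultiplicity_iff hq]
  exact ⟨fun h => ⟨h.trans (EuclideanDomain.gcd_dvd_left p q),
    h.trans (EuclideanDomain.gcd_dvd_right p q)⟩, fun h => EuclideanDomain.dvd_gcd h.1 h.2⟩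

lemma rad_ne_zero (g : ℂ[X]) : rad g ≠ 0 :=
  Finset.prod_ne_zero_iff.mpr fun a _ => X_sub_C_ne_zero a

lemma radE_ne_zero {g : ℂ[X]} (hg : g ≠ 0) (e : ℕ) : radE e g ≠ 0 := fun h =>
  hg (EuclideanDomain.gcd_eq_zero_iff.mp h).1

lemma rootMultiplicity_rad_pow (g : ℂ[X]) (e : ℕ) (x : ℂ) :
    rootMultiplicity x (rad g ^ e) = if x ∈ g.roots then e else 0 := by
  classical
  rw [← count_roots, roots_pow, rad, roots_prod_X_sub_C, Multiset.count_nsmul,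
    Multiset.count_eq_of_nodup g.roots.toFinset.nodup]
  simp only [Finset.mem_val, Multiset.mem_toFinset, mul_ite, mul_one, mul_zero]

lemma rootMultiplicity_radE {g : ℂ[X]} (hg : g ≠ 0) (e : ℕ) (x : ℂ) :
    rootMultiplicity x (radE e g) = min (rootMultiplicity x g) e := by
  rw [radE, rootMultiplicity_euclideanGcd hg (pow_ne_zero e (rad_ne_zero g)),
    rootMultiplicity_rad_pow]
  split_ifs with hx
  · rfl
  · rw [← count_roots, Multiset.count_eq_zero_of_notMem hx]
    simp

lemma radE_mul_radE_dvd_radE_add {a b : ℂ[X]} (ha : a ≠ 0) (hb : b ≠ 0) (i j : ℕ) :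
    radE i a * radE j b ∣ radE (i + j) (a * b) := by
  have hab : a * b ≠ 0 := mul_ne_zero ha hb
  have hprod : radE i a * radE j b ≠ 0 := mul_ne_zero (radE_ne_zero ha i) (radE_ne_zero hb j)
  rw [IsAlgClosed.dvd_iff_roots_le_roots hprod (radE_ne_zero hab _), Multiset.le_iff_count]
  intro x
  rw [count_roots, count_roots, rootMultiplicity_mul hprod, rootMultiplicity_radE ha,
    rootMultiplicity_radE hb, rootMultiplicity_radE hab, rootMultiplicity_mul hab]
  omega

theorem stmt8 (a b : ℂ[X]) (ha : a ≠ 0) (hb : b ≠ 0) (i j : ℕ) :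
    radE i a * radE j b ∣ radE (i + j) (a * b) ∧
    rE i a + rE j b ≤ rE (i + j) (a * b) := by
  have hdvd := radE_mul_radE_dvd_radE_add ha hb i j
  refine ⟨hdvd, ?_⟩
  have hdeg := natDegree_le_of_dvd hdvd (radE_ne_zero (mul_ne_zero ha hb) (i + j))
  rwa [natDegree_mul (radE_ne_zero ha i) (radE_ne_zero hb j)] at hdeg
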